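/- (Converse bound of Corollary 3, combined form.) Let U, V, X, S, Y, Z be random variables taking values in finite sets on a common probability space, and assume the Markov chain (U,V) → (X,S) → (Y,Z), i.e., (U,V) and (Y,Z) are conditionally independent given (X,S). If in addition I(X; Y | U, S, V) ≥ I(X; Z | U, S, V) and I(U; Y | S) ≥ I(U; Z | S), then I(V; Y | U, S) - I(V; Z | U, S) ≤ I(X; Y | S) - I(X; Z | S). -/
import Mathlib


open MeasureTheory Real

/-- Shannon entropy of a finitely-valued random variable `X` under measure `μ`. -/
noncomputable def ent {Ω α : Type*} [MeasurableSpace Ω] [Fintype α]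
    (μ : Measure Ω) (X : Ω → α) : ℝ :=
  ∑ x : α, Real.negMulLog (μ (X ⁻¹' {x})).toReal

/-- Conditional Shannon entropy `H(X | Y) = H(X, Y) - H(Y)`. -/
noncomputable def condEnt {Ω α β : Type*} [MeasurableSpace Ω] [Fintype α] [Fintype β]
    (μ : Measure Ω) (X : Ω → α) (Y : Ω → β) : ℝ :=
  ent μ (fun ω => (X ω, Y ω)) - ent μ Y

/-- Mutual information `I(X; Y) = H(X) + H(Y) - H(X, Y)`. -/
noncomputable def mutInfo {Ω α β : Type*} [MeasurableSpace Ω] [Fintype α] [Fintype β]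
    (μ : Measure Ω) (X : Ω → α) (Y : Ω → β) : ℝ :=
  ent μ X + ent μ Y - ent μ (fun ω => (X ω, Y ω))

/-- Conditional mutual information `I(X; Y | Z) = H(X|Z) + H(Y|Z) - H(X,Y|Z)`. -/
noncomputable def condMutInfo {Ω α β γ : Type*} [MeasurableSpace Ω]
    [Fintype α] [Fintype β] [Fintype γ]
    (μ : Measure Ω) (X : Ω → α) (Y : Ω → β) (Z : Ω → γ) : ℝ :=
  condEnt μ X Z + condEnt μ Y Z - condEnt μ (fun ω => (X ω, Y ω)) Z

/-- `A` and `B` are conditionally independent given `C` (elementary form, for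
finitely-valued random variables): the Markov chain `A → C → B`. -/
def CondIndepFin {Ω α β γ : Type*} [MeasurableSpace Ω]
    (μ : MeasureTheory.Measure Ω) (A : Ω → α) (B : Ω → β) (C : Ω → γ) : Prop :=
  ∀ a b c, μ (A ⁻¹' {a} ∩ B ⁻¹' {b} ∩ C ⁻¹' {c}) * μ (C ⁻¹' {c}) =
    μ (A ⁻¹' {a} ∩ C ⁻¹' {c}) * μ (B ⁻¹' {b} ∩ C ⁻¹' {c})

/-- relabeling invariance. -/
lemma ent_comp {Ω α β : Type*} [MeasurableSpace Ω] [Fintype α] [Fintype β]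
    (μ : Measure Ω) {f : α → β} (hf : Function.Injective f) (W : Ω → α) :
    ent μ (fun ω => f (W ω)) = ent μ W := by
  classical
  unfold ent
  have key : ∀ x : α, μ ((fun ω => f (W ω)) ⁻¹' {f x}) = μ (W ⁻¹' {x}) := by
    intro x; congr 1; ext ω; simp [hf.eq_iff]
  calc ∑ b : β, negMulLog (μ ((fun ω => f (W ω)) ⁻¹' {b})).toReal
      = ∑ b ∈ Finset.univ.image f, negMulLog (μ ((fun ω => f (W ω)) ⁻¹' {b})).toReal := by
        symm
        apply Finset.sum_subset (Finset.subset_univ _)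
        intro b _ hb
        have he : (fun ω => f (W ω)) ⁻¹' {b} = ∅ := by
          ext ω
          simp only [Set.mem_preimage, Set.mem_singleton_iff, Set.mem_empty_iff_false,
            iff_false]
          intro h
          exact hb (Finset.mem_image.mpr ⟨W ω, Finset.mem_univ _, h⟩)
        rw [he]
        simp [negMulLog]
    _ = ∑ a : α, negMulLog (μ ((fun ω => f (W ω)) ⁻¹' {f a})).toReal :=
        Finset.sum_image (fun a _ a' _ h => hf h)
    _ = ∑ a : α, negMulLog (μ (W ⁻¹' {a})).toReal := by
        exact Finset.sum_congr rfl fun a _ => by rw [key]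

/-- sum of measures of fibers. -/
lemma sum_meas_fiber {Ω β : Type*} [MeasurableSpace Ω] [Fintype β] [MeasurableSpace β]
    [MeasurableSingletonClass β] (μ : Measure Ω) {B : Ω → β} (hB : Measurable B)
    (s : Set Ω) : ∑ b, μ (s ∩ B ⁻¹' {b}) = μ s := by
  have h1 : ∀ b : β, μ (s ∩ B ⁻¹' {b}) = μ.restrict s (B ⁻¹' {b}) := by
    intro b
    rw [Measure.restrict_apply (hB (measurableSet_singleton b)), Set.inter_comm]
  simp_rw [h1]
  rw [sum_measure_preimage_singleton Finset.univ
    (fun y _ => hB (measurableSet_singleton y))]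
  simp

lemma sum_toReal_meas_fiber {Ω β : Type*} [MeasurableSpace Ω] [Fintype β] [MeasurableSpace β]
    [MeasurableSingletonClass β] (μ : Measure Ω) [IsProbabilityMeasure μ] {B : Ω → β}
    (hB : Measurable B) (s : Set Ω) :
    ∑ b, (μ (s ∩ B ⁻¹' {b})).toReal = (μ s).toReal := by
  rw [← ENNReal.toReal_sum (fun b _ => measure_ne_top μ _), sum_meas_fiber μ hB s]

lemma negMulLog_of_mul_eq {x y z w : ℝ} (hx : 0 ≤ x) (hxy : x ≤ y) (hxz : x ≤ z)
    (hyw : y ≤ w) (h : x * w = y * z) :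
    negMulLog x = -(x * log y) - x * log z + x * log w := by
  rcases eq_or_lt_of_le hx with h0 | h0
  · simp [← h0, negMulLog]
  · have hy : 0 < y := lt_of_lt_of_le h0 hxy
    have hz : 0 < z := lt_of_lt_of_le h0 hxz
    have hw : 0 < w := lt_of_lt_of_le hy hyw
    have hxval : x = y * z / w := by field_simp; linarith [h]
    have hlog : Real.log x = Real.log y + Real.log z - Real.log w := by
      rw [hxval, Real.log_div (by positivity) hw.ne', Real.log_mul hy.ne' hz.ne']
    rw [negMulLog, hlog]; ring

lemma condMutInfo_eq_zero_of_condIndepFin {Ω α β γ : Type*} [MeasurableSpace Ω]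
    [Fintype α] [Fintype β] [Fintype γ]
    [MeasurableSpace α] [MeasurableSingletonClass α]
    [MeasurableSpace β] [MeasurableSingletonClass β]
    [MeasurableSpace γ] [MeasurableSingletonClass γ]
    (μ : Measure Ω) [IsProbabilityMeasure μ]
    {A : Ω → α} {B : Ω → β} {C : Ω → γ}
    (hA : Measurable A) (hB : Measurable B) (hC : Measurable C)
    (h : CondIndepFin μ A B C) : condMutInfo μ A B C = 0 := by
  set p : α → β → γ → ℝ := fun a b c => (μ (A ⁻¹' {a} ∩ B ⁻¹' {b} ∩ C ⁻¹' {c})).toReal with hp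
  set pac : α → γ → ℝ := fun a c => (μ (A ⁻¹' {a} ∩ C ⁻¹' {c})).toReal with hpac
  set pbc : β → γ → ℝ := fun b c => (μ (B ⁻¹' {b} ∩ C ⁻¹' {c})).toReal with hpbc
  set pc : γ → ℝ := fun c => (μ (C ⁻¹' {c})).toReal with hpc
  -- marginals
  have hmargB : ∀ a c, ∑ b, p a b c = pac a c := by
    intro a c
    have : ∀ b, p a b c = (μ ((A ⁻¹' {a} ∩ C ⁻¹' {c}) ∩ B ⁻¹' {b})).toReal := by
      intro b; simp only [hp]; congr 2; ext ω; simp only [Set.mem_inter_iff]; tauto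
    simp_rw [this]
    exact sum_toReal_meas_fiber μ hB _
  have hmargA : ∀ b c, ∑ a, p a b c = pbc b c := by
    intro b c
    have : ∀ a, p a b c = (μ ((B ⁻¹' {b} ∩ C ⁻¹' {c}) ∩ A ⁻¹' {a})).toReal := by
      intro a; simp only [hp]; congr 2; ext ω; simp only [Set.mem_inter_iff]; tauto
    simp_rw [this]
    exact sum_toReal_meas_fiber μ hA _
  have hmargAC : ∀ c, ∑ a, pac a c = pc c := by
    intro c
    have : ∀ a, pac a c = (μ (C ⁻¹' {c} ∩ A ⁻¹' {a})).toReal := by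
      intro a; simp only [hpac]; congr 2; ext ω; simp only [Set.mem_inter_iff]; tauto
    simp_rw [this]
    exact sum_toReal_meas_fiber μ hA _
  -- pointwise expansion
  have hpt : ∀ a b c, negMulLog (p a b c)
      = -(p a b c * log (pac a c)) - p a b c * log (pbc b c) + p a b c * log (pc c) := by
    intro a b c
    apply negMulLog_of_mul_eq ENNReal.toReal_nonneg
    · exact ENNReal.toReal_mono (measure_ne_top μ _)
        (measure_mono fun ω hω => ⟨hω.1.1, hω.2⟩)
    · exact ENNReal.toReal_mono (measure_ne_top μ _)
        (measure_mono fun ω hω => ⟨hω.1.2, hω.2⟩)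
    · exact ENNReal.toReal_mono (measure_ne_top μ _)
        (measure_mono fun ω hω => hω.2)
    · simp only [hp, hpac, hpbc, hpc]
      rw [← ENNReal.toReal_mul, ← ENNReal.toReal_mul, h a b c]
  -- sum identities for each term
  have hT1 : ∑ a, ∑ b, ∑ c, p a b c * log (pac a c) = ∑ a, ∑ c, pac a c * log (pac a c) := by
    refine Finset.sum_congr rfl fun a _ => ?_
    rw [Finset.sum_comm]
    refine Finset.sum_congr rfl fun c _ => ?_
    rw [← Finset.sum_mul, hmargB a c]
  have hT2 : ∑ a, ∑ b, ∑ c, p a b c * log (pbc b c) = ∑ b, ∑ c, pbc b c * log (pbc b c) := by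
    rw [Finset.sum_comm]
    refine Finset.sum_congr rfl fun b _ => ?_
    rw [Finset.sum_comm]
    refine Finset.sum_congr rfl fun c _ => ?_
    rw [← Finset.sum_mul, hmargA b c]
  have hT3 : ∑ a, ∑ b, ∑ c, p a b c * log (pc c) = ∑ c, pc c * log (pc c) := by
    have step : ∀ a, ∑ b, ∑ c, p a b c * log (pc c) = ∑ c, (∑ b, p a b c) * log (pc c) := by
      intro a
      rw [Finset.sum_comm]
      exact Finset.sum_congr rfl fun c _ => (Finset.sum_mul _ _ _).symm
    simp_rw [step, hmargB]
    rw [Finset.sum_comm]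
    refine Finset.sum_congr rfl fun c _ => ?_
    rw [← Finset.sum_mul, hmargAC c]
  -- entropies as sums
  have hEntABC : ent μ (fun ω => ((A ω, B ω), C ω)) = ∑ a, ∑ b, ∑ c, negMulLog (p a b c) := by
    unfold ent
    rw [Fintype.sum_prod_type]
    rw [Fintype.sum_prod_type]
    refine Finset.sum_congr rfl fun a _ => Finset.sum_congr rfl fun b _ => ?_
    refine Finset.sum_congr rfl fun c _ => ?_
    have hs : (fun ω => ((A ω, B ω), C ω)) ⁻¹' {((a, b), c)}
        = A ⁻¹' {a} ∩ B ⁻¹' {b} ∩ C ⁻¹' {c} := by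
      ext ω
      simp only [Set.mem_preimage, Set.mem_singleton_iff, Prod.mk.injEq, Set.mem_inter_iff]
    rw [hs]
  have hEntAC : ent μ (fun ω => (A ω, C ω)) = ∑ a, ∑ c, negMulLog (pac a c) := by
    unfold ent
    rw [Fintype.sum_prod_type]
    refine Finset.sum_congr rfl fun a _ => Finset.sum_congr rfl fun c _ => ?_
    have hs : (fun ω => (A ω, C ω)) ⁻¹' {(a, c)} = A ⁻¹' {a} ∩ C ⁻¹' {c} := by
      ext ω
      simp only [Set.mem_preimage, Set.mem_singleton_iff, Prod.mk.injEq, Set.mem_inter_iff]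
    rw [hs]
  have hEntBC : ent μ (fun ω => (B ω, C ω)) = ∑ b, ∑ c, negMulLog (pbc b c) := by
    unfold ent
    rw [Fintype.sum_prod_type]
    refine Finset.sum_congr rfl fun b _ => Finset.sum_congr rfl fun c _ => ?_
    have hs : (fun ω => (B ω, C ω)) ⁻¹' {(b, c)} = B ⁻¹' {b} ∩ C ⁻¹' {c} := by
      ext ω
      simp only [Set.mem_preimage, Set.mem_singleton_iff, Prod.mk.injEq, Set.mem_inter_iff]
    rw [hs]
  have hEntC : ent μ C = ∑ c, negMulLog (pc c) := rfl
  -- combine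
  have hexp : ∑ a, ∑ b, ∑ c, negMulLog (p a b c)
      = -(∑ a, ∑ b, ∑ c, p a b c * log (pac a c))
        - (∑ a, ∑ b, ∑ c, p a b c * log (pbc b c))
        + (∑ a, ∑ b, ∑ c, p a b c * log (pc c)) := by
    simp_rw [hpt]
    simp [Finset.sum_add_distrib, Finset.sum_sub_distrib, Finset.sum_neg_distrib]
  have hAC' : ∑ a, ∑ c, negMulLog (pac a c) = -(∑ a, ∑ c, pac a c * log (pac a c)) := by
    simp [negMulLog, neg_mul, Finset.sum_neg_distrib]
  have hBC' : ∑ b, ∑ c, negMulLog (pbc b c) = -(∑ b, ∑ c, pbc b c * log (pbc b c)) := by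
    simp [negMulLog, neg_mul, Finset.sum_neg_distrib]
  have hC' : ∑ c, negMulLog (pc c) = -(∑ c, pc c * log (pc c)) := by
    simp [negMulLog, neg_mul, Finset.sum_neg_distrib]
  simp only [condMutInfo, condEnt]
  rw [hEntABC, hEntAC, hEntBC, hEntC]
  rw [hexp, hT1, hT2, hT3, hAC', hBC', hC']
  ring

/-- Marginalize away the second component of `B` in a conditional independence. -/
lemma condIndepFin_fst {Ω α β₁ β₂ γ : Type*} [MeasurableSpace Ω]
    [Fintype β₂] [MeasurableSpace β₂] [MeasurableSingletonClass β₂]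
    (μ : Measure Ω) {A : Ω → α} {B₁ : Ω → β₁} {B₂ : Ω → β₂} {C : Ω → γ}
    (hB₂ : Measurable B₂)
    (h : CondIndepFin μ A (fun ω => (B₁ ω, B₂ ω)) C) :
    CondIndepFin μ A B₁ C := by
  intro a b c
  calc μ (A ⁻¹' {a} ∩ B₁ ⁻¹' {b} ∩ C ⁻¹' {c}) * μ (C ⁻¹' {c})
      = (∑ z, μ ((A ⁻¹' {a} ∩ B₁ ⁻¹' {b} ∩ C ⁻¹' {c}) ∩ B₂ ⁻¹' {z})) * μ (C ⁻¹' {c}) := by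
        rw [sum_meas_fiber μ hB₂]
    _ = ∑ z, μ ((A ⁻¹' {a} ∩ B₁ ⁻¹' {b} ∩ C ⁻¹' {c}) ∩ B₂ ⁻¹' {z}) * μ (C ⁻¹' {c}) :=
        Finset.sum_mul _ _ _
    _ = ∑ z, μ (A ⁻¹' {a} ∩ C ⁻¹' {c}) * μ ((B₁ ⁻¹' {b} ∩ C ⁻¹' {c}) ∩ B₂ ⁻¹' {z}) := by
        refine Finset.sum_congr rfl fun z _ => ?_
        have h1 : (A ⁻¹' {a} ∩ B₁ ⁻¹' {b} ∩ C ⁻¹' {c}) ∩ B₂ ⁻¹' {z}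
            = A ⁻¹' {a} ∩ (fun ω => (B₁ ω, B₂ ω)) ⁻¹' {(b, z)} ∩ C ⁻¹' {c} := by
          ext ω
          simp only [Set.mem_inter_iff, Set.mem_preimage, Set.mem_singleton_iff,
            Prod.mk.injEq]
          tauto
        have h2 : (fun ω => (B₁ ω, B₂ ω)) ⁻¹' {(b, z)} ∩ C ⁻¹' {c}
            = (B₁ ⁻¹' {b} ∩ C ⁻¹' {c}) ∩ B₂ ⁻¹' {z} := by
          ext ω
          simp only [Set.mem_inter_iff, Set.mem_preimage, Set.mem_singleton_iff,
            Prod.mk.injEq]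
          tauto
        rw [h1, h a (b, z) c, h2]
    _ = μ (A ⁻¹' {a} ∩ C ⁻¹' {c}) * ∑ z, μ ((B₁ ⁻¹' {b} ∩ C ⁻¹' {c}) ∩ B₂ ⁻¹' {z}) :=
        (Finset.mul_sum _ _ _).symm
    _ = μ (A ⁻¹' {a} ∩ C ⁻¹' {c}) * μ (B₁ ⁻¹' {b} ∩ C ⁻¹' {c}) := by
        rw [sum_meas_fiber μ hB₂]

/-- Chain rule identity. -/
lemma chain_id {Ω α β γ δ τ : Type*} [MeasurableSpace Ω]
    [Fintype α] [Fintype β] [Fintype γ] [Fintype δ] [Fintype τ]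
    (μ : Measure Ω) (A : Ω → α) (B : Ω → β) (W : Ω → δ) (C : Ω → γ) (T : Ω → τ) :
    condMutInfo μ W T C
      + condMutInfo μ (fun ω => (A ω, B ω)) T (fun ω => (W ω, C ω))
    = condMutInfo μ A T C + condMutInfo μ B T (fun ω => (A ω, C ω))
      + condMutInfo μ W T (fun ω => (A ω, C ω, B ω)) := by
  have e1 : ent μ (fun ω => ((W ω, T ω), C ω)) = ent μ (fun ω => (T ω, (W ω, C ω))) :=
    (ent_comp μ (f := fun x : δ × τ × γ => ((x.1, x.2.1), x.2.2))
      (fun x y hxy => by simp_all [Prod.ext_iff]) (fun ω => (W ω, T ω, C ω))).trans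
    (ent_comp μ (f := fun x : δ × τ × γ => (x.2.1, (x.1, x.2.2)))
      (fun x y hxy => by simp_all [Prod.ext_iff]) (fun ω => (W ω, T ω, C ω))).symm
  have e2 : ent μ (fun ω => ((A ω, T ω), C ω)) = ent μ (fun ω => (T ω, (A ω, C ω))) :=
    (ent_comp μ (f := fun x : α × τ × γ => ((x.1, x.2.1), x.2.2))
      (fun x y hxy => by simp_all [Prod.ext_iff]) (fun ω => (A ω, T ω, C ω))).trans
    (ent_comp μ (f := fun x : α × τ × γ => (x.2.1, (x.1, x.2.2)))
      (fun x y hxy => by simp_all [Prod.ext_iff]) (fun ω => (A ω, T ω, C ω))).symm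
  have e3 : ent μ (fun ω => ((B ω, T ω), (A ω, C ω)))
      = ent μ (fun ω => (T ω, (A ω, C ω, B ω))) :=
    (ent_comp μ (f := fun x : α × β × τ × γ => ((x.2.1, x.2.2.1), (x.1, x.2.2.2)))
      (fun x y hxy => by simp_all [Prod.ext_iff]) (fun ω => (A ω, B ω, T ω, C ω))).trans
    (ent_comp μ (f := fun x : α × β × τ × γ => (x.2.2.1, (x.1, (x.2.2.2, x.2.1))))
      (fun x y hxy => by simp_all [Prod.ext_iff]) (fun ω => (A ω, B ω, T ω, C ω))).symm
  have e4 : ent μ (fun ω => (B ω, (A ω, C ω))) = ent μ (fun ω => (A ω, C ω, B ω)) :=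
    (ent_comp μ (f := fun x : α × β × γ => (x.2.1, (x.1, x.2.2)))
      (fun x y hxy => by simp_all [Prod.ext_iff]) (fun ω => (A ω, B ω, C ω))).trans
    (ent_comp μ (f := fun x : α × β × γ => (x.1, (x.2.2, x.2.1)))
      (fun x y hxy => by simp_all [Prod.ext_iff]) (fun ω => (A ω, B ω, C ω))).symm
  have e5 : ent μ (fun ω => ((A ω, B ω), (W ω, C ω)))
      = ent μ (fun ω => (W ω, (A ω, C ω, B ω))) :=
    (ent_comp μ (f := fun x : α × β × δ × γ => ((x.1, x.2.1), (x.2.2.1, x.2.2.2)))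
      (fun x y hxy => by simp_all [Prod.ext_iff]) (fun ω => (A ω, B ω, W ω, C ω))).trans
    (ent_comp μ (f := fun x : α × β × δ × γ => (x.2.2.1, (x.1, (x.2.2.2, x.2.1))))
      (fun x y hxy => by simp_all [Prod.ext_iff]) (fun ω => (A ω, B ω, W ω, C ω))).symm
  have e6 : ent μ (fun ω => (((A ω, B ω), T ω), (W ω, C ω)))
      = ent μ (fun ω => ((W ω, T ω), (A ω, C ω, B ω))) :=
    (ent_comp μ (f := fun x : α × β × τ × δ × γ =>
        (((x.1, x.2.1), x.2.2.1), (x.2.2.2.1, x.2.2.2.2)))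
      (fun x y hxy => by simp_all [Prod.ext_iff]) (fun ω => (A ω, B ω, T ω, W ω, C ω))).trans
    (ent_comp μ (f := fun x : α × β × τ × δ × γ =>
        ((x.2.2.2.1, x.2.2.1), (x.1, (x.2.2.2.2, x.2.1))))
      (fun x y hxy => by simp_all [Prod.ext_iff]) (fun ω => (A ω, B ω, T ω, W ω, C ω))).symm
  simp only [condMutInfo, condEnt]
  linarith [e1, e2, e3, e4, e5, e6]

theorem corollary3_converse_bound
    {Ω 𝒰 𝒱 𝒳 σ 𝒴 𝒵 : Type*} [MeasurableSpace Ω]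
    [Fintype 𝒰] [Fintype 𝒱] [Fintype 𝒳] [Fintype σ] [Fintype 𝒴] [Fintype 𝒵]
    [MeasurableSpace 𝒰] [MeasurableSingletonClass 𝒰]
    [MeasurableSpace 𝒱] [MeasurableSingletonClass 𝒱]
    [MeasurableSpace 𝒳] [MeasurableSingletonClass 𝒳]
    [MeasurableSpace σ] [MeasurableSingletonClass σ]
    [MeasurableSpace 𝒴] [MeasurableSingletonClass 𝒴]
    [MeasurableSpace 𝒵] [MeasurableSingletonClass 𝒵]
    (μ : Measure Ω) [IsProbabilityMeasure μ]
    (U : Ω → 𝒰) (V : Ω → 𝒱) (X : Ω → 𝒳) (S : Ω → σ) (Y : Ω → 𝒴) (Z : Ω → 𝒵)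
    (hU : Measurable U) (hV : Measurable V) (hX : Measurable X)
    (hS : Measurable S) (hY : Measurable Y) (hZ : Measurable Z)
    (hMarkov : CondIndepFin μ (fun ω => (U ω, V ω)) (fun ω => (Y ω, Z ω))
      (fun ω => (X ω, S ω)))
    (hcap : condMutInfo μ X Z (fun ω => (U ω, S ω, V ω))
      ≤ condMutInfo μ X Y (fun ω => (U ω, S ω, V ω)))
    (hcap' : condMutInfo μ U Z S ≤ condMutInfo μ U Y S)
    :
    condMutInfo μ V Y (fun ω => (U ω, S ω)) - condMutInfo μ V Z (fun ω => (U ω, S ω))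
    ≤ condMutInfo μ X Y S - condMutInfo μ X Z S := by
  -- marginalized Markov chains
  have hMarkovY : CondIndepFin μ (fun ω => (U ω, V ω)) Y (fun ω => (X ω, S ω)) :=
    condIndepFin_fst μ hZ hMarkov
  have hMarkovSwap : CondIndepFin μ (fun ω => (U ω, V ω)) (fun ω => (Z ω, Y ω))
      (fun ω => (X ω, S ω)) := by
    intro a b c
    have hset : (fun ω => (Z ω, Y ω)) ⁻¹' {b} = (fun ω => (Y ω, Z ω)) ⁻¹' {(b.2, b.1)} := by
      ext ω
      simp only [Set.mem_preimage, Set.mem_singleton_iff, Prod.mk.injEq, Prod.ext_iff]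
      tauto
    rw [hset]
    exact hMarkov a (b.2, b.1) c
  have hMarkovZ : CondIndepFin μ (fun ω => (U ω, V ω)) Z (fun ω => (X ω, S ω)) :=
    condIndepFin_fst μ hY hMarkovSwap
  -- vanishing conditional mutual informations
  have hzeroY : condMutInfo μ (fun ω => (U ω, V ω)) Y (fun ω => (X ω, S ω)) = 0 :=
    condMutInfo_eq_zero_of_condIndepFin μ (hU.prodMk hV) hY (hX.prodMk hS) hMarkovY
  have hzeroZ : condMutInfo μ (fun ω => (U ω, V ω)) Z (fun ω => (X ω, S ω)) = 0 :=
    condMutInfo_eq_zero_of_condIndepFin μ (hU.prodMk hV) hZ (hX.prodMk hS) hMarkovZ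
  -- chain rule identities
  have hchainY := chain_id μ U V X S Y
  have hchainZ := chain_id μ U V X S Z
  rw [hzeroY] at hchainY
  rw [hzeroZ] at hchainZ
  linarith
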